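/- Let dim₁(·|·) and dim₂(·|·) be bivariant Sylvester module rank functions for a unital ring R. If dim₁(M|M) = dim₂(M|M) for all finitely presented left R-modules M, then dim₁ = dim₂, i.e. dim₁(M₁|M₂) = dim₂(M₁|M₂) for all pairs of modules M₁ ⊆ M₂. -/

import Mathlib

universe u
open scoped NNReal ENNReal

/-- A bivariant Sylvester module rank function for a unital ring `R`: to each pair of left
`R`-modules `N ⊆ M` (encoded as a submodule `N` of a module `M`) it assigns a value
`d M N ∈ ℝ≥0∞`, thought of as `dim(N|M)`, satisfying isomorphism invariance, normalization,
direct sum additivity, the two continuity conditions, and additivity. -/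
structure BivariantSylvesterRank (R : Type u) [Ring R] where
  d : ∀ (M : Type u) [AddCommGroup M] [Module R M], Submodule R M → ℝ≥0∞
  iso_invariant : ∀ (M N : Type u) [AddCommGroup M] [Module R M] [AddCommGroup N] [Module R N]
      (e : M ≃ₗ[R] N) (p : Submodule R M),
      d M p = d N (p.map (e : M →ₗ[R] N))
  d_zero : d PUnit ⊤ = 0
  d_ring : d R ⊤ = 1
  d_prod : ∀ (M N : Type u) [AddCommGroup M] [Module R M] [AddCommGroup N] [Module R N]
      (p : Submodule R M) (q : Submodule R N),
      d (M × N) (p.prod q) = d M p + d N q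
  continuity_sup : ∀ (M : Type u) [AddCommGroup M] [Module R M] (p : Submodule R M),
      d M p = ⨆ (p' : {p' : Submodule R M // p'.FG ∧ p' ≤ p}), d M p'.1
  continuity_inf : ∀ (M : Type u) [AddCommGroup M] [Module R M] (p : Submodule R M), p.FG →
      d M p = ⨅ (q : {q : Submodule R M // q.FG ∧ p ≤ q}), d q.1 (p.comap q.1.subtype)
  additivity : ∀ (M : Type u) [AddCommGroup M] [Module R M] (p : Submodule R M),
      d M ⊤ = d M p + d (M ⧸ p) ⊤

/-!
Additivity `dim(M) = dim(N|M) + dim(M/N)` lets one pass between `dim(N|M)` and `dim(M/N)`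
whenever `dim(M)` is finite and known. For `M = Rⁿ` and `N` finitely generated, `Rⁿ/N` is
finitely presented, so `dim₁(N|Rⁿ) = dim₂(N|Rⁿ)`; by the `sup`-continuity this extends to every
submodule of `Rⁿ`, hence to `dim(Rⁿ/K)` for every `K`, i.e. to `dim(M)` for every finitely
generated `M`, and then to `dim(N|M)` for every submodule `N` of such `M`. The general case
follows from the two continuity conditions, which reduce `dim(N|M)` to pairs of finitely
generated modules.
-/

namespace BivariantSylvesterRank

variable {R : Type u} [Ring R]

section

variable (dim : BivariantSylvesterRank R)

theorem d_top_congr {M N : Type u} [AddCommGroup M] [Module R M] [AddCommGroup N] [Module R N]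
    (e : M ≃ₗ[R] N) : dim.d M ⊤ = dim.d N ⊤ := by
  rw [dim.iso_invariant M N e ⊤, Submodule.map_top, LinearEquiv.range]

theorem d_top_pi_fin (n : ℕ) : dim.d (Fin n → R) ⊤ = n := by
  induction n with
  | zero =>
    rw [dim.d_top_congr (LinearEquiv.ofSubsingleton (Fin 0 → R) PUnit.{u + 1}), dim.d_zero,
      Nat.cast_zero]
  | succ n ih =>
    rw [← dim.d_top_congr (Fin.consLinearEquiv R fun _ : Fin (n + 1) => R), ← Submodule.prod_top,
      dim.d_prod, dim.d_ring, ih, Nat.cast_succ, add_comm]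

theorem d_top_ne_top {M : Type u} [AddCommGroup M] [Module R M] [Module.Finite R M] :
    dim.d M ⊤ ≠ ⊤ := by
  obtain ⟨n, f, hf⟩ := Module.Finite.exists_fin' R M
  have hsum := dim.additivity (Fin n → R) (LinearMap.ker f)
  rw [dim.d_top_pi_fin, dim.d_top_congr (f.quotKerEquivOfSurjective hf)] at hsum
  exact fun htop => ENNReal.natCast_ne_top n (by rw [hsum, htop, add_top])

end

section

variable (dim₁ dim₂ : BivariantSylvesterRank R)

theorem d_eq_iff_d_quotient_top_eq {M : Type u} [AddCommGroup M] [Module R M]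
    (hM : dim₁.d M ⊤ = dim₂.d M ⊤) (hfin : dim₁.d M ⊤ ≠ ⊤) (N : Submodule R M) :
    dim₁.d M N = dim₂.d M N ↔ dim₁.d (M ⧸ N) ⊤ = dim₂.d (M ⧸ N) ⊤ := by
  rw [dim₁.additivity M N, dim₂.additivity M N] at hM
  rw [dim₁.additivity M N] at hfin
  constructor
  · intro hN
    rw [hN] at hM hfin
    exact (ENNReal.add_right_inj (ENNReal.add_ne_top.mp hfin).1).mp hM
  · intro hquot
    rw [hquot] at hM hfin
    exact (ENNReal.add_left_inj (ENNReal.add_ne_top.mp hfin).2).mp hM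

variable (h : ∀ (M : Type u) [AddCommGroup M] [Module R M],
  Module.FinitePresentation R M → dim₁.d M ⊤ = dim₂.d M ⊤)
include h

theorem d_pi_fin_eq_of_eq_on_finitePresentation {n : ℕ} (K : Submodule R (Fin n → R)) :
    dim₁.d (Fin n → R) K = dim₂.d (Fin n → R) K := by
  rw [dim₁.continuity_sup, dim₂.continuity_sup]
  refine iSup_congr fun ⟨N, hN, _⟩ => ?_
  have hpres : Module.FinitePresentation R ((Fin n → R) ⧸ N) :=
    Module.finitePresentation_of_free_of_surjective N.mkQ N.mkQ_surjective (by rwa [N.ker_mkQ])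
  refine (dim₁.d_eq_iff_d_quotient_top_eq dim₂ ?_ ?_ N).mpr (h _ hpres)
  · rw [dim₁.d_top_pi_fin, dim₂.d_top_pi_fin]
  · exact dim₁.d_top_ne_top

theorem d_top_eq_of_finite_of_eq_on_finitePresentation (M : Type u) [AddCommGroup M] [Module R M]
    [Module.Finite R M] : dim₁.d M ⊤ = dim₂.d M ⊤ := by
  obtain ⟨n, f, hf⟩ := Module.Finite.exists_fin' R M
  rw [← dim₁.d_top_congr (f.quotKerEquivOfSurjective hf),
    ← dim₂.d_top_congr (f.quotKerEquivOfSurjective hf)]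
  refine (dim₁.d_eq_iff_d_quotient_top_eq dim₂ ?_ ?_ _).mp
    (dim₁.d_pi_fin_eq_of_eq_on_finitePresentation dim₂ h _)
  · rw [dim₁.d_top_pi_fin, dim₂.d_top_pi_fin]
  · exact dim₁.d_top_ne_top

theorem d_eq_of_finite_of_eq_on_finitePresentation (M : Type u) [AddCommGroup M] [Module R M]
    [Module.Finite R M] (N : Submodule R M) : dim₁.d M N = dim₂.d M N :=
  (dim₁.d_eq_iff_d_quotient_top_eq dim₂
    (dim₁.d_top_eq_of_finite_of_eq_on_finitePresentation dim₂ h M) dim₁.d_top_ne_top N).mpr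
    (dim₁.d_top_eq_of_finite_of_eq_on_finitePresentation dim₂ h (M ⧸ N))

end

end BivariantSylvesterRank

/-- uniqueness. If two bivariant Sylvester module rank functions for a
unital ring `R` agree on `dim(M|M)` for all finitely presented modules `M`, then they are
equal on all pairs of modules. -/
theorem bivariantSylvesterRank_eq_of_eq_on_finitePresentation (R : Type u) [Ring R]
    (dim₁ dim₂ : BivariantSylvesterRank R)
    (h : ∀ (M : Type u) [AddCommGroup M] [Module R M],
      Module.FinitePresentation R M → dim₁.d M ⊤ = dim₂.d M ⊤) :
    ∀ (M : Type u) [AddCommGroup M] [Module R M] (N : Submodule R M),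
      dim₁.d M N = dim₂.d M N := by
  intro M _ _ N
  rw [dim₁.continuity_sup, dim₂.continuity_sup]
  refine iSup_congr fun ⟨N', hN', _⟩ => ?_
  rw [dim₁.continuity_inf M N' hN', dim₂.continuity_inf M N' hN']
  refine iInf_congr fun ⟨Q, hQ, _⟩ => ?_
  have : Module.Finite R Q := Module.Finite.iff_fg.mpr hQ
  exact dim₁.d_eq_of_finite_of_eq_on_finitePresentation dim₂ h Q _
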